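/- For λ' ⪯ λ'' in Λ, the linear map π_{λ',λ''} : A_{⪯λ''} → A_{⪯λ'} sending the orbit-sum basis element e_{(l,c)_{λ''}} to e_{(l,c)_{λ'}} (and to 0 when the orbit doesn't meet the smaller family) is a surjective algebra homomorphism, and its kernel is the ideal spanned by the basis elements mapped to 0. -/

import Mathlib

/-!
Since `G_{λ'} ≤ G_{λ''}`, every `G_{λ'}`-class of partial elements below `λ'` lies in a
`G_{λ''}`-class, and admissibility (`conj_cond`) makes this inclusion of classes injective.
Restricting coordinates along an injection is surjective, with kernel spanned by the basis
vectors outside its range.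

For multiplicativity, evaluate at a partial element `(μ, h)` with `μ ⪯ λ'`. If `(μ₁, h₁)(μ₂, h₂)
= (μ, h)` then `μ₁, μ₂ ⪯ μ ⪯ λ'`, as `μ` is their supremum. Hence the structure constants of
`A_{⪯λ''}` at `(μ, h)` vanish when a factor class misses `Λ_{⪯λ'}`, and otherwise count the same
pairs as those of `A_{⪯λ'}`. They only depend on the class of `(μ, h)`, because conjugation by
`G_λ` commutes with suprema.
-/

open scoped Classical

/-- An admissible set of data `(Λ, G, η)` in the sense of Ivanov–Kerov /
Alekseevski–Natanzon: a poset `Λ` with least element and binary suprema, a group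
`G` acting on `Λ` by order automorphisms, and a `G`-equivariant monotone family
of finite subgroups `G_λ = η λ` satisfying the admissibility axioms (in
particular axiom 5: partial elements lying below a common `λ` that are conjugate
in `G` are conjugate in `G_λ`, and its consequence that a `G`-conjugacy class
meets each `G_λ` in at most one `G_λ`-class). -/
structure AdmissibleData (G Λ : Type*) [Group G] [PartialOrder Λ] [OrderBot Λ]
    [MulAction G Λ] where
  wedge : Λ → Λ → Λ
  isLUB_wedge : ∀ a b : Λ, IsLUB {a, b} (wedge a b)
  eta : Λ → Subgroup G
  eta_mono : Monotone eta
  eta_bot : eta ⊥ = ⊥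
  smul_le_iff : ∀ (g : G) (a b : Λ), a ≤ b ↔ g • a ≤ g • b
  eta_equivariant : ∀ (g : G) (a : Λ) (x : G), x ∈ eta a ↔ g * x * g⁻¹ ∈ eta (g • a)
  eta_stabilizes : ∀ (a : Λ) (g : G), g ∈ eta a → g • a = a
  eta_finite : ∀ a : Λ, (eta a : Set G).Finite
  pred_finite : ∀ a : Λ, {b : Λ | b ≤ a}.Finite
  conj_cond : ∀ (lam lam' lam'' : Λ) (h' h'' : G), lam' ≤ lam → lam'' ≤ lam →
    h' ∈ eta lam' → h'' ∈ eta lam'' →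
    (∃ g : G, g • lam' = lam'' ∧ g * h' * g⁻¹ = h'') →
    ∃ g ∈ eta lam, g • lam' = lam'' ∧ g * h' * g⁻¹ = h''
  conj_in_sub : ∀ (a : Λ) (x y : G), x ∈ eta a → y ∈ eta a → IsConj x y →
    ∃ g ∈ eta a, g * x * g⁻¹ = y

variable {G Λ : Type*} [Group G] [PartialOrder Λ] [OrderBot Λ] [MulAction G Λ]

/-- Partial elements: pairs `(λ, h)` with `h ∈ G_λ`. -/
abbrev PartialElt (D : AdmissibleData G Λ) : Type _ := {p : Λ × G // p.2 ∈ D.eta p.1}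

/-- Conjugation of partial elements: `g • (λ, h) = (g•λ, g h g⁻¹)`; two partial
elements are equivalent iff they lie in the same `G`-orbit (conjugacy class). -/
def orbSetoid (D : AdmissibleData G Λ) : Setoid (PartialElt D) where
  r p q := ∃ g : G, g • p.val.1 = q.val.1 ∧ g * p.val.2 * g⁻¹ = q.val.2
  iseqv := by
    constructor
    · intro p; exact ⟨1, by simp, by simp⟩
    · rintro p q ⟨g, h1, h2⟩
      exact ⟨g⁻¹, by rw [← h1, inv_smul_smul], by rw [← h2]; group⟩
    · rintro p q r ⟨g, h1, h2⟩ ⟨g', h1', h2'⟩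
      exact ⟨g' * g, by rw [mul_smul, h1, h1'], by rw [← h2', ← h2]; group⟩

/-- Conjugacy classes of partial elements (the index set `Ω` of the basis of the
generalized Ivanov–Kerov algebra). -/
abbrev Orb (D : AdmissibleData G Λ) : Type _ := Quotient (orbSetoid D)

/-- Structure constant of the generalized IK-algebra: the number of pairs of
partial elements in the classes `ω', ω''` whose product is exactly the given
partial element `(λ, h)`. -/
noncomputable def Pconst (D : AdmissibleData G Λ) (ω' ω'' : Orb D) (lam : Λ) (h : G) : ℕ :=
  Nat.card {pq : PartialElt D × PartialElt D //
    Quotient.mk (orbSetoid D) pq.1 = ω' ∧ Quotient.mk (orbSetoid D) pq.2 = ω'' ∧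
    D.wedge pq.1.val.1 pq.2.val.1 = lam ∧ pq.1.val.2 * pq.2.val.2 = h}

/-- `ξ(l', c; l)` computed from representatives: the number of `μ` in the
`G`-orbit of `lam'` with `μ ⪯ lam` and `h ∈ G_μ`. -/
noncomputable def xiConst (D : AdmissibleData G Λ) (lam' : Λ) (h : G) (lam : Λ) : ℕ :=
  Nat.card {μ : Λ // (∃ g : G, g • lam' = μ) ∧ μ ≤ lam ∧ h ∈ D.eta μ}

/-- Structure constant `S^{c(λ)}_{c'(λ), c''(λ)}` of the center `Z(k[G_λ])`: the
number of factorizations `h = a·b` inside `G_λ` with `a` conjugate (in `G`) to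
`x'` and `b` conjugate to `x''`. -/
noncomputable def Sconst (D : AdmissibleData G Λ) (x' x'' : G) (lam : Λ) (h : G) : ℕ :=
  Nat.card {ab : G × G // ab.1 ∈ D.eta lam ∧ ab.2 ∈ D.eta lam ∧
    IsConj x' ab.1 ∧ IsConj x'' ab.2 ∧ ab.1 * ab.2 = h}

/-- Partial elements of the truncated family `Λ_{⪯λ}`: pairs `(μ, h)` with
`μ ⪯ λ` and `h ∈ G_μ`. -/
abbrev PartialEltLe (D : AdmissibleData G Λ) (lam : Λ) : Type _ :=
  {p : Λ × G // p.1 ≤ lam ∧ p.2 ∈ D.eta p.1}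

/-- Conjugacy of partial elements of `Λ_{⪯λ}` under the subgroup `G_λ`. -/
def orbSetoidLe (D : AdmissibleData G Λ) (lam : Λ) : Setoid (PartialEltLe D lam) where
  r p q := ∃ g ∈ D.eta lam, g • p.val.1 = q.val.1 ∧ g * p.val.2 * g⁻¹ = q.val.2
  iseqv := by
    constructor
    · intro p; exact ⟨1, one_mem _, by simp, by simp⟩
    · rintro p q ⟨g, hg, h1, h2⟩
      exact ⟨g⁻¹, inv_mem hg, by rw [← h1, inv_smul_smul], by rw [← h2]; group⟩
    · rintro p q r ⟨g, hg, h1, h2⟩ ⟨g', hg', h1', h2'⟩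
      exact ⟨g' * g, mul_mem hg' hg, by rw [mul_smul, h1, h1'],
        by rw [← h2', ← h2]; group⟩

/-- Conjugacy classes of partial elements of the truncated family: the basis
index set of the finite-dimensional algebra `A_{⪯λ}`. -/
abbrev OrbLe (D : AdmissibleData G Λ) (lam : Λ) : Type _ := Quotient (orbSetoidLe D lam)

/-- Structure constants of the truncated algebra `A_{⪯λ}`. -/
noncomputable def PconstLe (D : AdmissibleData G Λ) (lam : Λ)
    (ω' ω'' : OrbLe D lam) (μ : Λ) (h : G) : ℕ :=
  Nat.card {pq : PartialEltLe D lam × PartialEltLe D lam //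
    Quotient.mk (orbSetoidLe D lam) pq.1 = ω' ∧
    Quotient.mk (orbSetoidLe D lam) pq.2 = ω'' ∧
    D.wedge pq.1.val.1 pq.2.val.1 = μ ∧ pq.1.val.2 * pq.2.val.2 = h}

/-- The multiplication of the truncated algebra `A_{⪯λ}` on coordinates with
respect to the basis of conjugacy-class sums, given by the structure constants. -/
noncomputable def mulLe (k : Type*) [Field k] (D : AdmissibleData G Λ) (lam : Λ)
    (a b : OrbLe D lam → k) : OrbLe D lam → k :=
  fun ω => ∑ᶠ ω' : OrbLe D lam, ∑ᶠ ω'' : OrbLe D lam,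
    a ω' * b ω'' *
      (PconstLe D lam ω' ω'' (Quotient.out ω).val.1 (Quotient.out ω).val.2 : k)

/-- For `λ' ⪯ λ''`, every `G_{λ'}`-class of partial elements below `λ'` is
contained in a unique `G_{λ''}`-class of partial elements below `λ''`. -/
def restrictOrb (D : AdmissibleData G Λ) {lam' lam'' : Λ} (hle : lam' ≤ lam'') :
    OrbLe D lam' → OrbLe D lam'' :=
  Quotient.lift
    (fun p => Quotient.mk (orbSetoidLe D lam'')
      ⟨p.val, le_trans p.prop.1 hle, p.prop.2⟩)
    (by rintro p q ⟨g, hg, h1, h2⟩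
        exact Quotient.sound ⟨g, D.eta_mono hle hg, h1, h2⟩)

theorem finsum_comp_of_injective {α β M : Type*} [AddCommMonoid M] {f : α → β}
    (hf : Function.Injective f) {g : β → M} (hg : ∀ b ∉ Set.range f, g b = 0) :
    ∑ᶠ a, g (f a) = ∑ᶠ b, g b := by
  rw [← finsum_mem_range hf, ← finsum_mem_univ g]
  refine finsum_mem_inter_support_eq g _ _ ?_
  ext b
  simp only [Set.mem_inter_iff, Set.mem_univ, true_and, Function.mem_support,
    and_iff_right_iff_imp]
  exact fun hb => by_contra fun hr => hb (hg b hr)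

theorem Pi.comp_eq_zero_iff_mem_span_single {α β R : Type*} [Semiring R] [Finite β]
    [DecidableEq β] (f : α → β) (a : β → R) :
    a ∘ f = 0 ↔
      a ∈ Submodule.span R ((fun b => Pi.single b (1 : R)) '' (Set.range f)ᶜ) := by
  have hbasis : ⇑(Pi.basisFun R β) = fun b => Pi.single b 1 := funext (Pi.basisFun_apply R β)
  rw [← hbasis, Module.Basis.mem_span_image, funext_iff]
  simp only [Function.comp_apply, Pi.zero_apply, Set.subset_def, Finset.mem_coe, Finsupp.mem_support_iff, Pi.basisFun_repr,
    Set.mem_compl_iff, Set.mem_range, not_exists]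
  exact ⟨fun ha b hb x hx => hb (hx ▸ ha x), fun ha x => by_contra fun hx => ha _ hx x rfl⟩

namespace AdmissibleData

variable (D : AdmissibleData G Λ)

theorem le_wedge_left (a b : Λ) : a ≤ D.wedge a b :=
  (D.isLUB_wedge a b).1 (Set.mem_insert _ _)

theorem le_wedge_right (a b : Λ) : b ≤ D.wedge a b :=
  (D.isLUB_wedge a b).1 (Set.mem_insert_of_mem _ rfl)

def smulOrderIso (g : G) : Λ ≃o Λ where
  toEquiv := MulAction.toPerm g
  map_rel_iff' := (D.smul_le_iff g _ _).symm

theorem wedge_smul (g : G) (a b : Λ) : D.wedge (g • a) (g • b) = g • D.wedge a b :=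
  (D.isLUB_wedge _ _).unique <| by
    have := (D.smulOrderIso g).isLUB_image'.2 (D.isLUB_wedge a b)
    rwa [Set.image_pair] at this

theorem smul_le_of_mem_eta {lam μ : Λ} {g : G} (hg : g ∈ D.eta lam) (hμ : μ ≤ lam) :
    g • μ ≤ lam := by
  simpa only [D.eta_stabilizes lam g hg] using (D.smul_le_iff g μ lam).1 hμ

instance finite_partialEltLe (lam : Λ) : Finite (PartialEltLe D lam) :=
  Set.Finite.to_subtype (s := {p : Λ × G | p.1 ≤ lam ∧ p.2 ∈ D.eta p.1}) <|
    ((D.pred_finite lam).prod (D.eta_finite lam)).subset fun _ hp =>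
      ⟨hp.1, D.eta_mono hp.1 hp.2⟩

instance finite_orbLe (lam : Λ) : Finite (OrbLe D lam) := Quotient.finite _

end AdmissibleData

namespace PartialEltLe

variable {D : AdmissibleData G Λ}

def conj {lam : Λ} (g : G) (hg : g ∈ D.eta lam) (p : PartialEltLe D lam) :
    PartialEltLe D lam :=
  ⟨(g • p.1.1, g * p.1.2 * g⁻¹), D.smul_le_of_mem_eta hg p.2.1,
    (D.eta_equivariant g _ _).1 p.2.2⟩

def conjPerm {lam : Λ} (g : G) (hg : g ∈ D.eta lam) : Equiv.Perm (PartialEltLe D lam) where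
  toFun := conj g hg
  invFun := conj g⁻¹ (inv_mem hg)
  left_inv p := Subtype.ext (Prod.ext (inv_smul_smul g _) (by simp [conj, mul_assoc]))
  right_inv p := Subtype.ext (Prod.ext (smul_inv_smul g _) (by simp [conj, mul_assoc]))

theorem mk_conj {lam : Λ} (g : G) (hg : g ∈ D.eta lam) (p : PartialEltLe D lam) :
    Quotient.mk (orbSetoidLe D lam) (conj g hg p) = Quotient.mk _ p :=
  (Quotient.sound (s := orbSetoidLe D lam) ⟨g, hg, rfl, rfl⟩).symm

def castLE {lam' lam'' : Λ} (hle : lam' ≤ lam'') (p : PartialEltLe D lam') :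
    PartialEltLe D lam'' :=
  ⟨p.1, p.2.1.trans hle, p.2.2⟩

def ofLE {lam' lam'' : Λ} (p : PartialEltLe D lam'') (hp : p.1.1 ≤ lam') :
    PartialEltLe D lam' :=
  ⟨p.1, hp, p.2.2⟩

end PartialEltLe

open PartialEltLe

section Restriction

variable (D : AdmissibleData G Λ) {lam' lam'' : Λ} (hle : lam' ≤ lam'')

theorem restrictOrb_mk (p : PartialEltLe D lam') :
    restrictOrb D hle (Quotient.mk _ p) = Quotient.mk _ (castLE hle p) := rfl

theorem mk_eq_restrictOrb_mk (p : PartialEltLe D lam'') (hp : p.1.1 ≤ lam') :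
    Quotient.mk (orbSetoidLe D lam'') p = restrictOrb D hle (Quotient.mk _ (ofLE p hp)) := rfl

theorem restrictOrb_injective : Function.Injective (restrictOrb D hle) := by
  rintro ⟨p⟩ ⟨q⟩ hpq
  obtain ⟨g, -, hμ, hh⟩ := Quotient.exact hpq
  obtain ⟨g', hg', hμ', hh'⟩ := D.conj_cond lam' p.1.1 q.1.1 p.1.2 q.1.2
    p.2.1 q.2.1 p.2.2 q.2.2 ⟨g, hμ, hh⟩
  exact Quotient.sound ⟨g', hg', hμ', hh'⟩

end Restriction

section StructureConstants

variable (D : AdmissibleData G Λ)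

theorem PconstLe_conj (lam : Λ) (ω' ω'' : OrbLe D lam) (μ : Λ) (h g : G)
    (hg : g ∈ D.eta lam) :
    PconstLe D lam ω' ω'' (g • μ) (g * h * g⁻¹) = PconstLe D lam ω' ω'' μ h := by
  refine Nat.card_congr (Equiv.subtypeEquiv ((conjPerm g hg).prodCongr (conjPerm g hg))
    fun pq => ?_).symm
  simp only [Equiv.prodCongr_apply, Prod.map_fst, Prod.map_snd, conjPerm, Equiv.coe_fn_mk, mk_conj]
  simp only [conj]
  rw [D.wedge_smul, smul_left_cancel_iff, conj_mul, mul_left_inj, mul_right_inj]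

theorem PconstLe_congr {lam : Λ} (ω' ω'' : OrbLe D lam) {p q : PartialEltLe D lam}
    (hpq : Quotient.mk (orbSetoidLe D lam) p = Quotient.mk _ q) :
    PconstLe D lam ω' ω'' p.1.1 p.1.2 = PconstLe D lam ω' ω'' q.1.1 q.1.2 := by
  obtain ⟨g, hg, hμ, hh⟩ := Quotient.exact hpq
  rw [← hμ, ← hh, PconstLe_conj D lam ω' ω'' _ _ g hg]

variable {lam' lam'' : Λ} (hle : lam' ≤ lam'')

theorem PconstLe_eq_zero_of_notMem_range (σ' σ'' : OrbLe D lam'') {μ : Λ} (h : G)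
    (hμ : μ ≤ lam')
    (hσ : σ' ∉ Set.range (restrictOrb D hle) ∨ σ'' ∉ Set.range (restrictOrb D hle)) :
    PconstLe D lam'' σ' σ'' μ h = 0 := by
  refine Nat.card_eq_zero.2 (Or.inl ⟨fun ⟨⟨p, q⟩, hp, hq, hpq, _⟩ => ?_⟩)
  subst hp hq
  rcases hσ with hσ | hσ
  · exact hσ ⟨_, (mk_eq_restrictOrb_mk D hle p ((D.le_wedge_left _ _).trans (hpq ▸ hμ))).symm⟩
  · exact hσ ⟨_, (mk_eq_restrictOrb_mk D hle q ((D.le_wedge_right _ _).trans (hpq ▸ hμ))).symm⟩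

theorem PconstLe_restrictOrb (ω' ω'' : OrbLe D lam') {μ : Λ} (h : G) (hμ : μ ≤ lam') :
    PconstLe D lam'' (restrictOrb D hle ω') (restrictOrb D hle ω'') μ h =
      PconstLe D lam' ω' ω'' μ h := by
  have hinj := restrictOrb_injective D hle
  refine Nat.card_congr
    { toFun := fun x => ⟨(ofLE x.1.1 ((D.le_wedge_left _ _).trans (x.2.2.2.1 ▸ hμ)),
          ofLE x.1.2 ((D.le_wedge_right _ _).trans (x.2.2.2.1 ▸ hμ))),
        hinj x.2.1, hinj x.2.2.1, x.2.2.2⟩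
      invFun := fun y => ⟨(castLE hle y.1.1, castLE hle y.1.2),
        congrArg (restrictOrb D hle) y.2.1, congrArg (restrictOrb D hle) y.2.2.1, y.2.2.2⟩
      left_inv := fun _ => rfl
      right_inv := fun _ => rfl }

end StructureConstants

theorem mulLe_comp_restrictOrb (k : Type*) [Field k] (D : AdmissibleData G Λ)
    {lam' lam'' : Λ} (hle : lam' ≤ lam'') (a b : OrbLe D lam'' → k) :
    mulLe k D lam'' a b ∘ restrictOrb D hle =
      mulLe k D lam' (a ∘ restrictOrb D hle) (b ∘ restrictOrb D hle) := by
  funext ω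
  have hinj := restrictOrb_injective D hle
  have hμ : (Quotient.out ω).1.1 ≤ lam' := (Quotient.out ω).2.1
  -- `mulLe` reads the constants at `Quotient.out`; move to a representative below `lam'`.
  have hout : ∀ σ' σ'', PconstLe D lam'' σ' σ'' (Quotient.out (restrictOrb D hle ω)).1.1
      (Quotient.out (restrictOrb D hle ω)).1.2 =
      PconstLe D lam'' σ' σ'' (Quotient.out ω).1.1 (Quotient.out ω).1.2 := fun σ' σ'' =>
    PconstLe_congr D σ' σ'' (q := castLE hle (Quotient.out ω)) <| by
      rw [Quotient.out_eq, ← restrictOrb_mk, Quotient.out_eq]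
  simp only [Function.comp_apply, mulLe, hout]
  refine (finsum_comp_of_injective hinj fun σ' hσ' => ?_).symm.trans
    (finsum_congr fun ω' => (finsum_comp_of_injective hinj fun σ'' hσ'' => ?_).symm.trans
      (finsum_congr fun ω'' => ?_))
  · exact finsum_eq_zero_of_forall_eq_zero fun σ'' => by
      rw [PconstLe_eq_zero_of_notMem_range D hle _ _ _ hμ (Or.inl hσ'), Nat.cast_zero, mul_zero]
  · rw [PconstLe_eq_zero_of_notMem_range D hle _ _ _ hμ (Or.inr hσ''), Nat.cast_zero, mul_zero]
  · rw [PconstLe_restrictOrb D hle _ _ _ hμ]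

/-- For `λ' ⪯ λ''`, the linear map
`π_{λ',λ''} : A_{⪯λ''} → A_{⪯λ'}` sending the orbit-sum basis element
`e_{(l,c)_{λ''}}` to `e_{(l,c)_{λ'}}` (and to `0` when the class does not meet
the smaller family) — realized on coordinates as precomposition with
`restrictOrb` — is a surjective algebra homomorphism, and its kernel is the
(span of the) set of basis elements mapped to `0`. -/
theorem stmt15 (k : Type*) [Field k] (D : AdmissibleData G Λ)
    (lam' lam'' : Λ) (hle : lam' ≤ lam'') :
    -- surjectivity
    Function.Surjective
      (fun a : OrbLe D lam'' → k => a ∘ restrictOrb D hle) ∧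
    -- linearity
    (∀ a b : OrbLe D lam'' → k,
      (a + b) ∘ restrictOrb D hle = a ∘ restrictOrb D hle + b ∘ restrictOrb D hle) ∧
    (∀ (c : k) (a : OrbLe D lam'' → k),
      (c • a) ∘ restrictOrb D hle = c • (a ∘ restrictOrb D hle)) ∧
    -- multiplicativity (homomorphism of algebras)
    (∀ a b : OrbLe D lam'' → k,
      mulLe k D lam'' a b ∘ restrictOrb D hle =
        mulLe k D lam' (a ∘ restrictOrb D hle) (b ∘ restrictOrb D hle)) ∧
    -- the kernel is spanned by the basis elements mapped to zero
    {a : OrbLe D lam'' → k | a ∘ restrictOrb D hle = 0} =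
      ↑(Submodule.span k
        ((fun ω => Pi.single ω (1 : k)) ''
          {ω : OrbLe D lam'' | ω ∉ Set.range (restrictOrb D hle)})) := by
  have hinj := restrictOrb_injective D hle
  refine ⟨hinj.surjective_comp_right, fun a b => rfl, fun c a => rfl,
    mulLe_comp_restrictOrb k D hle, ?_⟩
  ext a
  exact Pi.comp_eq_zero_iff_mem_span_single _ a
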